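/- arXiv:2508.12947 — 2 statements merged into one kernel-verified Lean document; each statement's English description precedes it below -/
import Mathlib

section
/- Let 1 ≤ d ≤ q and suppose the value function decomposes as ν(C) = Σ_{j ∈ C∩{1,…,d}} Σ_{k ∈ C∩{1,…,d}} a_{j,k} + ν₂(C ∩ {d+1,…,q}) for all C ⊆ Q, where A = (a_{j,k}) ∈ ℝ^{q×q} vanishes outside its upper-left d×d block and ν₂ is a real-valued function on subsets of {d+1,…,q}. Then for every permutation π of (1,…,q) and every 1 ≤ j ≤ d, the paired single-permutation PermutationSHAP estimate is exact: φ̂_j^{(1)} = φ_j = ½ · Σ_{k=1}^d (a_{j,k} + a_{k,j}). -/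
open Finset

/-- Shapley value of player `j` for value function `ν` on coalitions of `Fin q`. -/
noncomputable def shapley {q : ℕ} (ν : Finset (Fin q) → ℝ) (j : Fin q) : ℝ :=
  ((q : ℝ))⁻¹ * ∑ C ∈ (Finset.univ.erase j).powerset,
    (((q - 1).choose C.card : ℝ))⁻¹ * (ν (insert j C) - ν C)

/-- The coalition `C_{π,j}` of players preceding `j` in the permutation `π`,
where `π i` is the player at position `i`. -/
def preceding {q : ℕ} (π : Equiv.Perm (Fin q)) (j : Fin q) : Finset (Fin q) :=
  (Finset.univ.filter (fun i : Fin q => i < π.symm j)).image π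

/-- The reversed permutation `ρ(π) = (π_q, …, π_1)`. -/
def reversedPerm {q : ℕ} (π : Equiv.Perm (Fin q)) : Equiv.Perm (Fin q) :=
  Fin.revPerm.trans π

/-- Paired single-permutation PermutationSHAP estimate. -/
noncomputable def pairedEstimate {q : ℕ} (ν : Finset (Fin q) → ℝ)
    (π : Equiv.Perm (Fin q)) (j : Fin q) : ℝ :=
  (1 / 2 : ℝ) * (ν (insert j (preceding π j)) - ν (preceding π j)
    + ν (insert j (preceding (reversedPerm π) j)) - ν (preceding (reversedPerm π) j))

section Aux

variable {q : ℕ}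

lemma mem_preceding (π : Equiv.Perm (Fin q)) (j k : Fin q) :
    k ∈ preceding π j ↔ π.symm k < π.symm j := by
  simp only [preceding, Finset.mem_image, Finset.mem_filter, Finset.mem_univ, true_and]
  constructor
  · rintro ⟨i, hi, rfl⟩; simpa using hi
  · intro h; exact ⟨π.symm k, h, π.apply_symm_apply k⟩

lemma notMem_preceding (π : Equiv.Perm (Fin q)) (j : Fin q) : j ∉ preceding π j := by
  simp [mem_preceding]

lemma preceding_reversed (π : Equiv.Perm (Fin q)) (j : Fin q) :
    preceding (reversedPerm π) j = univ \ insert j (preceding π j) := by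
  ext k
  have hsymm : ∀ x, (reversedPerm π).symm x = (π.symm x).rev := fun x => rfl
  simp only [mem_preceding, hsymm, Fin.rev_lt_rev, mem_sdiff, mem_univ, true_and,
    mem_insert, not_or]
  constructor
  · intro h
    exact ⟨fun hk => by subst hk; exact lt_irrefl _ h, fun hk => lt_asymm h hk⟩
  · rintro ⟨h1, h2⟩
    rcases lt_or_gt_of_ne
        (fun he : π.symm k = π.symm j => h1 (by simpa using π.symm.injective he)) with h | h
    · exact absurd h h2
    · exact h

lemma delta_eq (d : ℕ) (A : Fin q → Fin q → ℝ) (ν ν₂ : Finset (Fin q) → ℝ)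
    (hν : ∀ C : Finset (Fin q),
      ν C = (∑ j ∈ C.filter (fun i : Fin q => (i : ℕ) < d),
               ∑ k ∈ C.filter (fun i : Fin q => (i : ℕ) < d), A j k)
        + ν₂ (C.filter (fun i : Fin q => d ≤ (i : ℕ))))
    (j : Fin q) (hj : (j : ℕ) < d) (C : Finset (Fin q)) (hjC : j ∉ C) :
    ν (insert j C) - ν C
      = A j j + ∑ k ∈ C.filter (fun i : Fin q => (i : ℕ) < d), (A j k + A k j) := by
  have h1 : (insert j C).filter (fun i : Fin q => (i : ℕ) < d)
      = insert j (C.filter (fun i : Fin q => (i : ℕ) < d)) := by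
    rw [Finset.filter_insert, if_pos hj]
  have h2 : (insert j C).filter (fun i : Fin q => d ≤ (i : ℕ))
      = C.filter (fun i : Fin q => d ≤ (i : ℕ)) := by
    rw [Finset.filter_insert, if_neg (not_le.mpr hj)]
  have hjS : j ∉ C.filter (fun i : Fin q => (i : ℕ) < d) :=
    fun h => hjC (Finset.mem_filter.mp h).1
  rw [hν, hν, h1, h2]
  rw [Finset.sum_insert hjS]
  simp only [Finset.sum_insert hjS, Finset.sum_add_distrib]
  ring

lemma card_erase_univ (j : Fin q) : ((univ : Finset (Fin q)).erase j).card = q - 1 := by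
  rw [Finset.card_erase_of_mem (Finset.mem_univ j), Finset.card_univ, Fintype.card_fin]

lemma sum_w (j : Fin q) :
    ∑ C ∈ ((univ : Finset (Fin q)).erase j).powerset,
      (((q - 1).choose C.card : ℝ))⁻¹ = q := by
  have hq : 1 ≤ q := Nat.pos_of_ne_zero (fun h => by subst h; exact j.elim0)
  rw [Finset.sum_powerset, card_erase_univ]
  have : ∀ s ∈ Finset.range (q - 1 + 1),
      (∑ C ∈ Finset.powersetCard s ((univ : Finset (Fin q)).erase j),
        (((q - 1).choose C.card : ℝ))⁻¹) = 1 := by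
    intro s hs
    have hs' : s ≤ q - 1 := Nat.lt_succ_iff.mp (Finset.mem_range.mp hs)
    have hcard : ∀ C ∈ Finset.powersetCard s ((univ : Finset (Fin q)).erase j),
        (((q - 1).choose C.card : ℝ))⁻¹ = (((q - 1).choose s : ℝ))⁻¹ := by
      intro C hC
      rw [(Finset.mem_powersetCard.mp hC).2]
    rw [Finset.sum_congr rfl hcard, Finset.sum_const, Finset.card_powersetCard,
      card_erase_univ, nsmul_eq_mul]
    have hne : (0 : ℝ) < ((q - 1).choose s : ℝ) := by
      exact_mod_cast Nat.choose_pos hs'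
    field_simp
  rw [Finset.sum_congr rfl this, Finset.sum_const, Finset.card_range, nsmul_eq_mul, mul_one]
  push_cast [Nat.sub_add_cancel hq]
  ring

lemma sum_w_mem (j k : Fin q) (hk : k ∈ (univ : Finset (Fin q)).erase j) :
    ∑ C ∈ ((univ : Finset (Fin q)).erase j).powerset,
      (((q - 1).choose C.card : ℝ))⁻¹ * (if k ∈ C then (1 : ℝ) else 0) = q / 2 := by
  set t := (univ : Finset (Fin q)).erase j with ht
  have hbij :
      ∑ C ∈ t.powerset, (((q - 1).choose C.card : ℝ))⁻¹ * (if k ∈ C then (0 : ℝ) else 1)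
        = ∑ C ∈ t.powerset, (((q - 1).choose C.card : ℝ))⁻¹ * (if k ∈ C then (1 : ℝ) else 0) := by
    refine Finset.sum_nbij' (fun C => t \ C) (fun C => t \ C) ?_ ?_ ?_ ?_ ?_
    · intro C _; exact Finset.mem_powerset.mpr (Finset.sdiff_subset)
    · intro C _; exact Finset.mem_powerset.mpr (Finset.sdiff_subset)
    · intro C hC; exact Finset.sdiff_sdiff_eq_self (Finset.mem_powerset.mp hC)
    · intro C hC; exact Finset.sdiff_sdiff_eq_self (Finset.mem_powerset.mp hC)
    · intro C hC
      have hsub : C ⊆ t := Finset.mem_powerset.mp hC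
      have hcard : (t \ C).card = (q - 1) - C.card := by
        rw [Finset.card_sdiff_of_subset hsub, card_erase_univ]
      have hCle : C.card ≤ q - 1 := by
        rw [← card_erase_univ (q := q) j]; exact Finset.card_le_card hsub
      have hch : ((q - 1).choose ((t \ C).card)) = (q - 1).choose C.card := by
        rw [hcard, Nat.choose_symm hCle]
      have hmem : (k ∈ t \ C) ↔ ¬ (k ∈ C) := by
        simp [Finset.mem_sdiff, hk]
      rw [hch]
      by_cases hkc : k ∈ C <;> simp [hkc, hmem]
  have hsum :
      (∑ C ∈ t.powerset, (((q - 1).choose C.card : ℝ))⁻¹ * (if k ∈ C then (1 : ℝ) else 0))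
        + ∑ C ∈ t.powerset, (((q - 1).choose C.card : ℝ))⁻¹ * (if k ∈ C then (0 : ℝ) else 1)
        = q := by
    rw [← Finset.sum_add_distrib]
    have : ∀ C ∈ t.powerset,
        (((q - 1).choose C.card : ℝ))⁻¹ * (if k ∈ C then (1 : ℝ) else 0)
          + (((q - 1).choose C.card : ℝ))⁻¹ * (if k ∈ C then (0 : ℝ) else 1)
          = (((q - 1).choose C.card : ℝ))⁻¹ := by
      intro C _
      by_cases hkc : k ∈ C <;> simp [hkc]
    rw [Finset.sum_congr rfl this, sum_w]
  rw [hbij] at hsum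
  linarith

end Aux

/-- in the bilinear-plus-general setting, the paired
single-permutation PermutationSHAP estimate is exact for the first `d` players. -/
theorem paired_permutationSHAP_exact_bilinear_plus_general
    (q d : ℕ) (hd1 : 1 ≤ d) (hd2 : d ≤ q)
    (A : Fin q → Fin q → ℝ)
    (hA : ∀ j k : Fin q, (d ≤ (j : ℕ) ∨ d ≤ (k : ℕ)) → A j k = 0)
    (ν ν₂ : Finset (Fin q) → ℝ)
    (hν : ∀ C : Finset (Fin q),
      ν C = (∑ j ∈ C.filter (fun i : Fin q => (i : ℕ) < d),
               ∑ k ∈ C.filter (fun i : Fin q => (i : ℕ) < d), A j k)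
        + ν₂ (C.filter (fun i : Fin q => d ≤ (i : ℕ))))
    (π : Equiv.Perm (Fin q)) (j : Fin q) (hj : (j : ℕ) < d) :
    pairedEstimate ν π j = shapley ν j ∧
      shapley ν j
        = (1 / 2 : ℝ) * ∑ k ∈ Finset.univ.filter (fun i : Fin q => (i : ℕ) < d),
            (A j k + A k j) := by
  have hq : (q : ℝ) ≠ 0 := by
    exact_mod_cast Nat.pos_of_ne_zero (fun h => by subst h; exact j.elim0) |>.ne'
  set t := (univ : Finset (Fin q)).erase j with ht
  set B : Fin q → ℝ := fun k => A j k + A k j with hB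
  -- the target: (1/2) * ∑_{k<d} B k = A j j + (1/2) * ∑_{k ∈ t, k<d} B k
  have hsplit : (∑ k ∈ Finset.univ.filter (fun i : Fin q => (i : ℕ) < d), B k)
      = B j + ∑ k ∈ t.filter (fun i : Fin q => (i : ℕ) < d), B k := by
    have hmem : j ∈ Finset.univ.filter (fun i : Fin q => (i : ℕ) < d) := by
      simp [hj]
    have : t.filter (fun i : Fin q => (i : ℕ) < d)
        = (Finset.univ.filter (fun i : Fin q => (i : ℕ) < d)).erase j := by
      rw [ht, Finset.filter_erase]
    rw [this, Finset.add_sum_erase _ _ hmem]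
  -- target value
  set T : ℝ := A j j + (1 / 2 : ℝ) * ∑ k ∈ t.filter (fun i : Fin q => (i : ℕ) < d), B k with hT
  have htarget : (1 / 2 : ℝ) * (∑ k ∈ Finset.univ.filter (fun i : Fin q => (i : ℕ) < d),
      (A j k + A k j)) = T := by
    rw [hT]
    have : (∑ k ∈ Finset.univ.filter (fun i : Fin q => (i : ℕ) < d), (A j k + A k j))
        = ∑ k ∈ Finset.univ.filter (fun i : Fin q => (i : ℕ) < d), B k := rfl
    rw [this, hsplit, hB]
    ring
  -- shapley = T
  have hshap : shapley ν j = T := by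
    unfold shapley
    have hstep : ∀ C ∈ t.powerset,
        (((q - 1).choose C.card : ℝ))⁻¹ * (ν (insert j C) - ν C)
          = (((q - 1).choose C.card : ℝ))⁻¹ * A j j
            + ∑ k ∈ t.filter (fun i : Fin q => (i : ℕ) < d),
                ((((q - 1).choose C.card : ℝ))⁻¹ * (if k ∈ C then (1:ℝ) else 0)) * B k := by
      intro C hC
      have hsub : C ⊆ t := Finset.mem_powerset.mp hC
      have hjC : j ∉ C := fun h => (Finset.mem_erase.mp (hsub h)).1 rfl
      rw [delta_eq d A ν ν₂ hν j hj C hjC]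
      have hset : (t.filter (fun i : Fin q => (i : ℕ) < d)) ∩ C
          = C.filter (fun i : Fin q => (i : ℕ) < d) := by
        ext x
        simp only [Finset.mem_inter, Finset.mem_filter, ht, Finset.mem_erase, Finset.mem_univ,
          true_and, and_true]
        constructor
        · rintro ⟨⟨_, hx2⟩, hx3⟩; exact ⟨hx3, hx2⟩
        · rintro ⟨hx1, hx2⟩; exact ⟨⟨fun h => hjC (h ▸ hx1), hx2⟩, hx1⟩
      have hind : (∑ k ∈ C.filter (fun i : Fin q => (i : ℕ) < d), B k)
          = ∑ k ∈ t.filter (fun i : Fin q => (i : ℕ) < d),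
              (if k ∈ C then B k else 0) := by
        rw [Finset.sum_ite_mem, hset]
      rw [mul_add, hind, Finset.mul_sum]
      congr 1
      refine Finset.sum_congr rfl fun k _ => ?_
      by_cases hkc : k ∈ C <;> simp [hkc]
    rw [Finset.sum_congr rfl hstep, Finset.sum_add_distrib, ← Finset.sum_mul, sum_w j,
      Finset.sum_comm]
    have hinner : ∀ k ∈ t.filter (fun i : Fin q => (i : ℕ) < d),
        (∑ C ∈ t.powerset,
          ((((q - 1).choose C.card : ℝ))⁻¹ * (if k ∈ C then (1:ℝ) else 0)) * B k)
          = ((q : ℝ) / 2) * B k := by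
      intro k hk
      rw [← Finset.sum_mul, sum_w_mem j k (Finset.mem_filter.mp hk).1]
    rw [Finset.sum_congr rfl hinner, hT, ← Finset.mul_sum]
    field_simp
  have hpaired : pairedEstimate ν π j = T := by
    unfold pairedEstimate
    set C₁ := preceding π j with hC₁
    set C₂ := preceding (reversedPerm π) j with hC₂
    have h2 : C₂ = univ \ insert j C₁ := preceding_reversed π j
    have hj1 : j ∉ C₁ := notMem_preceding π j
    have hj2 : j ∉ C₂ := notMem_preceding _ j
    have e1 := delta_eq d A ν ν₂ hν j hj C₁ hj1
    have e2 := delta_eq d A ν ν₂ hν j hj C₂ hj2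
    have hdisj : Disjoint (C₁.filter (fun i : Fin q => (i : ℕ) < d))
        (C₂.filter (fun i : Fin q => (i : ℕ) < d)) := by
      rw [Finset.disjoint_left]
      intro a ha hb
      have ha1 := (Finset.mem_filter.mp ha).1
      have hb1 := (Finset.mem_filter.mp hb).1
      rw [h2, Finset.mem_sdiff] at hb1
      exact hb1.2 (Finset.mem_insert_of_mem ha1)
    have hunion : C₁.filter (fun i : Fin q => (i : ℕ) < d)
        ∪ C₂.filter (fun i : Fin q => (i : ℕ) < d)
        = t.filter (fun i : Fin q => (i : ℕ) < d) := by
      ext k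
      have hkj : k ∈ C₁ → k ≠ j := fun hk he => hj1 (he ▸ hk)
      simp only [Finset.mem_union, Finset.mem_filter, h2, Finset.mem_sdiff, Finset.mem_univ,
        true_and, and_true, Finset.mem_insert, not_or, ht, Finset.mem_erase]
      constructor
      · rintro (⟨hk, hkd⟩ | ⟨⟨hkj', _⟩, hkd⟩)
        · exact ⟨hkj hk, hkd⟩
        · exact ⟨hkj', hkd⟩
      · rintro ⟨hkj', hkd⟩
        by_cases hk : k ∈ C₁
        · exact Or.inl ⟨hk, hkd⟩
        · exact Or.inr ⟨⟨hkj', hk⟩, hkd⟩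
    have hsum12 : (∑ k ∈ C₁.filter (fun i : Fin q => (i : ℕ) < d), B k)
        + ∑ k ∈ C₂.filter (fun i : Fin q => (i : ℕ) < d), B k
        = ∑ k ∈ t.filter (fun i : Fin q => (i : ℕ) < d), B k := by
      rw [← Finset.sum_union hdisj, hunion]
    have hre : ν (insert j C₁) - ν C₁ + ν (insert j C₂) - ν C₂
        = (ν (insert j C₁) - ν C₁) + (ν (insert j C₂) - ν C₂) := by ring
    rw [hre, e1, e2, hT]
    have hBk : (fun k => A j k + A k j) = B := rfl
    linarith [hsum12]
  exact ⟨by rw [hpaired, hshap], by rw [hshap, htarget]⟩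
end

section
/- Suppose ν is a bilinear form given by a matrix A = (a_{j,k}) ∈ ℝ^{q×q} with q ≥ 2. Let Z_1,…,Z_n ∈ {0,1}^q be indicator vectors of nonempty proper coalitions such that Σ_{i=1}^n W(Z_i)W(Z_i)ᵀ is invertible. Then the unique minimizer over ψ ∈ ℝ^{q−1} of the paired least squares objective Σ_{i=1}^n [(ν(Z_i) − Z_{i,q} ν(1) − W(Z_i)ᵀψ)² + (ν(1−Z_i) − (1−Z_{i,q}) ν(1) − W(1−Z_i)ᵀψ)²] is ψ = (φ_1,…,φ_{q−1}), the first q−1 Shapley values of ν, i.e. ψ_j = ½ Σ_{k=1}^q (a_{j,k} + a_{k,j}) for 1 ≤ j ≤ q−1. -/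
open Finset

/-- The set of nonempty proper coalitions of `Fin q`. -/
def properCoalitions (q : ℕ) : Finset (Finset (Fin q)) :=
  Finset.univ.powerset.filter
    (fun C : Finset (Fin q) => C.Nonempty ∧ C ≠ Finset.univ)

/-- Shapley kernel weight of a coalition. -/
noncomputable def kernelWeight (q : ℕ) (C : Finset (Fin q)) : ℝ :=
  ((q : ℝ) - 1) /
    ((q.choose C.card : ℝ) * (C.card : ℝ) * ((q : ℝ) - (C.card : ℝ)))

/-- Normalized Shapley kernel probability weights. -/
noncomputable def kernelProb (q : ℕ) (C : Finset (Fin q)) : ℝ :=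
  kernelWeight q C / ∑ C' ∈ properCoalitions q, kernelWeight q C'

/-- The last player `q` (index `q - 1` in `Fin q`). -/
def lastPlayer (q : ℕ) (hq : 2 ≤ q) : Fin q := ⟨q - 1, by omega⟩

/-- Indicator `Z_q` of the last player belonging to the coalition `C`. -/
noncomputable def Zlast (q : ℕ) (hq : 2 ≤ q) (C : Finset (Fin q)) : ℝ :=
  if lastPlayer q hq ∈ C then 1 else 0

/-- The vector `W(Z) = Z̃ - Z_q · 1̃ ∈ ℝ^{q-1}` for the coalition `C` with
indicator vector `Z`. -/
noncomputable def Wvec (q : ℕ) (hq : 2 ≤ q) (C : Finset (Fin q))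
    (i : Fin (q - 1)) : ℝ :=
  (if Fin.castLE (Nat.sub_le q 1) i ∈ C then (1 : ℝ) else 0) - Zlast q hq C

/-- The first `q - 1` Shapley values `φ̃ ∈ ℝ^{q-1}`. -/
noncomputable def shapleyTrunc (q : ℕ) (ν : Finset (Fin q) → ℝ)
    (i : Fin (q - 1)) : ℝ :=
  shapley ν (Fin.castLE (Nat.sub_le q 1) i)

/-!
For a bilinear form the marginal contribution of `j` to `C ∌ j` is
`a_jj + ∑_{k ∈ C} (a_jk + a_kj)`; since a coalition and its complement in `Q \ {j}` carry the
same Shapley weight, every `k ≠ j` lies in half of the total weight, whence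
`φ_j = ½ ∑_k (a_jk + a_kj)`.

As `W(1 - Z) = -W(Z)`, the paired objective at `ψ` exceeds its value at `φ` by exactly
`2 ∑_i (W(Z_i)ᵀ(ψ - φ))²` provided the targets satisfy `y(Z) - y(1 - Z) = 2 W(Z)ᵀφ`. For a
bilinear form this follows from `ν(C) - ν(Cᶜ) = ∑_{j ∈ C} φ_j - ∑_{j ∉ C} φ_j` and efficiency
`∑_j φ_j = ν(Q)`. Invertibility of `∑_i W(Z_i) W(Z_i)ᵀ` makes the excess positive when `ψ ≠ φ`.
-/

open Matrix

lemma sum_powerset_inv_choose_card {α : Type*} (S : Finset α) :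
    ∑ C ∈ S.powerset, ((S.card.choose C.card : ℝ))⁻¹ = S.card + 1 := by
  rw [sum_powerset_apply_card (fun m => ((S.card.choose m : ℝ))⁻¹)]
  calc ∑ m ∈ range (S.card + 1), (S.card.choose m) • ((S.card.choose m : ℝ))⁻¹
      = ∑ m ∈ range (S.card + 1), (1 : ℝ) := by
        refine sum_congr rfl fun m hm => ?_
        have : 0 < S.card.choose m := Nat.choose_pos (Nat.lt_succ_iff.1 (mem_range.1 hm))
        rw [nsmul_eq_mul, mul_inv_cancel₀ (by positivity)]
    _ = S.card + 1 := by simp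

/-- Complementation in `S` swaps the subsets containing `k` with those avoiding it. -/
lemma sum_powerset_filter_mem_inv_choose_card {α : Type*} [DecidableEq α] {S : Finset α} {k : α}
    (hk : k ∈ S) :
    ∑ C ∈ S.powerset with k ∈ C, ((S.card.choose C.card : ℝ))⁻¹ = (S.card + 1) / 2 := by
  have hsymm : ∑ C ∈ S.powerset with k ∈ C, ((S.card.choose C.card : ℝ))⁻¹
      = ∑ C ∈ S.powerset with k ∉ C, ((S.card.choose C.card : ℝ))⁻¹ := by
    refine sum_nbij' (S \ ·) (S \ ·) ?_ ?_ ?_ ?_ ?_ <;>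
      simp only [mem_filter, mem_powerset, mem_sdiff]
    · intro C hC; exact ⟨sdiff_subset, fun h => h.2 hC.2⟩
    · intro C hC; exact ⟨sdiff_subset, hk, hC.2⟩
    · intro C hC; exact Finset.sdiff_sdiff_eq_self hC.1
    · intro C hC; exact Finset.sdiff_sdiff_eq_self hC.1
    · intro C hC
      rw [card_sdiff_of_subset hC.1, Nat.choose_symm (card_le_card hC.1)]
  have htotal := sum_filter_add_sum_filter_not S.powerset (k ∈ ·)
    (fun C => ((S.card.choose C.card : ℝ))⁻¹)
  rw [sum_powerset_inv_choose_card, ← hsymm] at htotal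
  linarith

section Bilinear

variable {α : Type*} (A : α → α → ℝ)

lemma bilinear_insert_sub [DecidableEq α] {C : Finset α} {j : α} (hj : j ∉ C) :
    ∑ x ∈ insert j C, ∑ y ∈ insert j C, A x y - ∑ x ∈ C, ∑ y ∈ C, A x y
      = A j j + ∑ k ∈ C, (A j k + A k j) := by
  simp only [sum_insert hj, sum_add_distrib]
  ring

lemma bilinear_sub_compl [Fintype α] [DecidableEq α] (C : Finset α) :
    ∑ x ∈ C, ∑ y ∈ C, A x y - ∑ x ∈ univ \ C, ∑ y ∈ univ \ C, A x y
      = ∑ j ∈ C, ∑ k, (A j k + A k j) - ∑ j, ∑ k, A j k := by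
  simp only [← compl_eq_univ_sdiff, sum_add_distrib, ← sum_add_sum_compl C]
  rw [sum_comm (s := C) (t := Cᶜ) (f := fun x y => A y x),
    sum_comm (s := C) (t := C) (f := fun x y => A y x)]
  ring

lemma sum_bilinear_symm [Fintype α] :
    ∑ j, ∑ k, (A j k + A k j) = 2 * ∑ j, ∑ k, A j k := by
  simp only [sum_add_distrib]
  rw [sum_comm (f := fun j k => A k j)]
  ring

end Bilinear

lemma shapley_bilinear {q : ℕ} {A : Fin q → Fin q → ℝ} {ν : Finset (Fin q) → ℝ}
    (hν : ∀ C, ν C = ∑ j ∈ C, ∑ k ∈ C, A j k) (j : Fin q) :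
    shapley ν j = (1 / 2 : ℝ) * ∑ k, (A j k + A k j) := by
  unfold shapley
  set S := univ.erase j
  have hS : S.card = q - 1 := by simp [S]
  have hcard : (S.card : ℝ) + 1 = q := by
    rw [hS, Nat.cast_sub j.pos]; push_cast; ring
  have hmarginal : ∀ C ∈ S.powerset, ν (insert j C) - ν C = A j j + ∑ k ∈ C, (A j k + A k j) :=
    fun C hC => by
      rw [hν, hν, bilinear_insert_sub A fun h => by simpa [S] using mem_powerset.1 hC h]
  have hswap : ∑ C ∈ S.powerset, ((S.card.choose C.card : ℝ))⁻¹ * ∑ k ∈ C, (A j k + A k j)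
      = ∑ k ∈ S, (∑ C ∈ S.powerset with k ∈ C, ((S.card.choose C.card : ℝ))⁻¹)
          * (A j k + A k j) := by
    simp only [mul_sum, sum_mul]
    refine sum_comm' fun C k => ?_
    simp only [mem_filter, mem_powerset]
    exact ⟨fun h => ⟨⟨h.1, h.2⟩, h.1 h.2⟩, fun h => ⟨h.1.1, h.1.2⟩⟩
  rw [← hS, sum_congr rfl fun C hC => by rw [hmarginal C hC, mul_add], sum_add_distrib,
    ← sum_mul, sum_powerset_inv_choose_card, hswap,
    sum_congr rfl fun k hk => by rw [sum_powerset_filter_mem_inv_choose_card hk],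
    ← mul_sum, ← add_sum_erase _ _ (mem_univ j), hcard]
  have : (q : ℝ) ≠ 0 := by rw [← hcard]; positivity
  field_simp
  ring

section KernelSHAP

variable {q : ℕ} (hq : 2 ≤ q)

lemma Zlast_compl (C : Finset (Fin q)) : Zlast q hq (univ \ C) = 1 - Zlast q hq C := by
  by_cases h : lastPlayer q hq ∈ C <;> simp [Zlast, h]

lemma Wvec_compl (C : Finset (Fin q)) : Wvec q hq (univ \ C) = -Wvec q hq C := by
  ext a
  by_cases h : Fin.castLE (Nat.sub_le q 1) a ∈ C <;> simp [Wvec, Zlast_compl, h]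

/-- The last coordinate of `Z - Z_q • 1` vanishes, so nothing is lost by dropping it. -/
lemma Wvec_dotProduct (C : Finset (Fin q)) (f : Fin q → ℝ) :
    Wvec q hq C ⬝ᵥ (fun a => f (Fin.castLE (Nat.sub_le q 1) a))
      = ∑ j ∈ C, f j - Zlast q hq C * ∑ j, f j := by
  obtain ⟨m, rfl⟩ : ∃ m, q = m + 1 := ⟨q - 1, by omega⟩
  have hlast : lastPlayer (m + 1) hq = Fin.last m := rfl
  have hcast : ∀ a : Fin m, Fin.castLE (Nat.sub_le (m + 1) 1) a = a.castSucc := fun _ => rfl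
  have hC : ∑ j ∈ C, f j = ∑ j, if j ∈ C then f j else 0 := by rw [sum_ite_mem, univ_inter]
  rw [hC, Fin.sum_univ_castSucc, Fin.sum_univ_castSucc, mul_add, mul_sum]
  simp only [dotProduct, Wvec, Zlast, hlast, hcast, sub_mul, sum_sub_distrib]
  split_ifs <;> simp [ite_mul]

lemma two_mul_Wvec_dotProduct_shapleyTrunc {A : Fin q → Fin q → ℝ} {ν : Finset (Fin q) → ℝ}
    (hν : ∀ C, ν C = ∑ j ∈ C, ∑ k ∈ C, A j k) (C : Finset (Fin q)) :
    2 * (Wvec q hq C ⬝ᵥ shapleyTrunc q ν)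
      = ν C - Zlast q hq C * ν univ - (ν (univ \ C) - Zlast q hq (univ \ C) * ν univ) := by
  have hφ : shapleyTrunc q ν
      = fun a => (1 / 2 : ℝ) * ∑ k, (A (Fin.castLE (Nat.sub_le q 1) a) k
          + A k (Fin.castLE (Nat.sub_le q 1) a)) :=
    funext fun a => shapley_bilinear hν _
  rw [hφ, Wvec_dotProduct hq C fun j => (1 / 2 : ℝ) * ∑ k, (A j k + A k j),
    Zlast_compl, hν, hν, hν]
  simp only [← mul_sum]
  linear_combination -bilinear_sub_compl A C - Zlast q hq C * sum_bilinear_symm A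

end KernelSHAP

section PairedLeastSquares

variable {ι p : Type*} [Fintype ι] [Fintype p]

/-- Least squares loss of a paired design: each row `w i` with target `y i` comes with its
mirrored row `-w i` with target `y' i`. -/
noncomputable def pairedLoss (w : ι → p → ℝ) (y y' : ι → ℝ) (ψ : p → ℝ) : ℝ :=
  ∑ i, ((y i - w i ⬝ᵥ ψ) ^ 2 + (y' i + w i ⬝ᵥ ψ) ^ 2)

lemma pairedLoss_eq_add {w : ι → p → ℝ} {y y' : ι → ℝ} {φ : p → ℝ}
    (hy : ∀ i, y i - y' i = 2 * (w i ⬝ᵥ φ)) (ψ : p → ℝ) :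
    pairedLoss w y y' ψ = pairedLoss w y y' φ + 2 * ∑ i, (w i ⬝ᵥ (ψ - φ)) ^ 2 := by
  simp only [pairedLoss, mul_sum, ← sum_add_distrib, dotProduct_sub]
  exact sum_congr rfl fun i _ => by linear_combination (2 * (w i ⬝ᵥ φ - w i ⬝ᵥ ψ)) * hy i

lemma sum_sq_dotProduct_pos [DecidableEq p] {w : ι → p → ℝ}
    (hw : IsUnit (∑ i, vecMulVec (w i) (w i))) {v : p → ℝ} (hv : v ≠ 0) :
    0 < ∑ i, (w i ⬝ᵥ v) ^ 2 := by
  obtain ⟨i, hi⟩ : ∃ i, w i ⬝ᵥ v ≠ 0 := by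
    by_contra! h
    refine hv (mulVec_injective_iff_isUnit.2 hw ?_)
    simp [sum_mulVec, vecMulVec_mulVec, h]
  exact sum_pos' (fun j _ => sq_nonneg _) ⟨i, mem_univ i, by positivity⟩

lemma pairedLoss_lt [DecidableEq p] {w : ι → p → ℝ} {y y' : ι → ℝ} {φ : p → ℝ}
    (hy : ∀ i, y i - y' i = 2 * (w i ⬝ᵥ φ)) (hw : IsUnit (∑ i, vecMulVec (w i) (w i)))
    {ψ : p → ℝ} (hψ : ψ ≠ φ) :
    pairedLoss w y y' φ < pairedLoss w y y' ψ := by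
  rw [pairedLoss_eq_add hy ψ, lt_add_iff_pos_right]
  exact mul_pos two_pos (sum_sq_dotProduct_pos hw (sub_ne_zero.2 hψ))

end PairedLeastSquares

theorem paired_kernelSHAP_exact_bilinear_general (q : ℕ) (hq : 2 ≤ q)
    (A : Fin q → Fin q → ℝ) (ν : Finset (Fin q) → ℝ)
    (hν : ∀ C : Finset (Fin q), ν C = ∑ j ∈ C, ∑ k ∈ C, A j k)
    (n : ℕ) (Z : Fin n → Finset (Fin q))
    (hfull : IsUnit (∑ i : Fin n,
      (Matrix.of (fun a b => Wvec q hq (Z i) a * Wvec q hq (Z i) b) :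
        Matrix (Fin (q - 1)) (Fin (q - 1)) ℝ))) :
    (∀ ψ : Fin (q - 1) → ℝ, ψ ≠ shapleyTrunc q ν →
      (∑ i : Fin n,
        ((ν (Z i) - Zlast q hq (Z i) * ν Finset.univ
            - ∑ a, Wvec q hq (Z i) a * shapleyTrunc q ν a) ^ 2
          + (ν (Finset.univ \ Z i)
              - Zlast q hq (Finset.univ \ Z i) * ν Finset.univ
              - ∑ a, Wvec q hq (Finset.univ \ Z i) a * shapleyTrunc q ν a) ^ 2))
        <
      (∑ i : Fin n,
        ((ν (Z i) - Zlast q hq (Z i) * ν Finset.univ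
            - ∑ a, Wvec q hq (Z i) a * ψ a) ^ 2
          + (ν (Finset.univ \ Z i)
              - Zlast q hq (Finset.univ \ Z i) * ν Finset.univ
              - ∑ a, Wvec q hq (Finset.univ \ Z i) a * ψ a) ^ 2))) ∧
    (∀ a : Fin (q - 1),
      shapleyTrunc q ν a
        = (1 / 2 : ℝ) * ∑ k, (A (Fin.castLE (Nat.sub_le q 1) a) k
            + A k (Fin.castLE (Nat.sub_le q 1) a))) := by
  refine ⟨fun ψ hψ => ?_, fun a => shapley_bilinear hν _⟩
  have hloss :=
    pairedLoss_lt (fun i => (two_mul_Wvec_dotProduct_shapleyTrunc hq hν (Z i)).symm) hfull hψ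
  simp only [Wvec_compl, Pi.neg_apply, neg_mul, sum_neg_distrib, sub_neg_eq_add]
  exact hloss

/-- for a bilinear value function, the paired-sampling KernelSHAP
least squares problem has the first `q - 1` Shapley values as unique minimizer,
whenever the paired design has full rank. -/
theorem paired_kernelSHAP_exact_bilinear (q : ℕ) (hq : 2 ≤ q)
    (A : Fin q → Fin q → ℝ) (ν : Finset (Fin q) → ℝ)
    (hν : ∀ C : Finset (Fin q), ν C = ∑ j ∈ C, ∑ k ∈ C, A j k)
    (n : ℕ) (Z : Fin n → Finset (Fin q))
    (hZ : ∀ i, (Z i).Nonempty ∧ Z i ≠ Finset.univ)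
    (hfull : IsUnit (∑ i : Fin n,
      (Matrix.of (fun a b => Wvec q hq (Z i) a * Wvec q hq (Z i) b) :
        Matrix (Fin (q - 1)) (Fin (q - 1)) ℝ))) :
    (∀ ψ : Fin (q - 1) → ℝ, ψ ≠ shapleyTrunc q ν →
      (∑ i : Fin n,
        ((ν (Z i) - Zlast q hq (Z i) * ν Finset.univ
            - ∑ a, Wvec q hq (Z i) a * shapleyTrunc q ν a) ^ 2
          + (ν (Finset.univ \ Z i)
              - Zlast q hq (Finset.univ \ Z i) * ν Finset.univ
              - ∑ a, Wvec q hq (Finset.univ \ Z i) a * shapleyTrunc q ν a) ^ 2))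
        <
      (∑ i : Fin n,
        ((ν (Z i) - Zlast q hq (Z i) * ν Finset.univ
            - ∑ a, Wvec q hq (Z i) a * ψ a) ^ 2
          + (ν (Finset.univ \ Z i)
              - Zlast q hq (Finset.univ \ Z i) * ν Finset.univ
              - ∑ a, Wvec q hq (Finset.univ \ Z i) a * ψ a) ^ 2))) ∧
    (∀ a : Fin (q - 1),
      shapleyTrunc q ν a
        = (1 / 2 : ℝ) * ∑ k, (A (Fin.castLE (Nat.sub_le q 1) a) k
            + A k (Fin.castLE (Nat.sub_le q 1) a))) :=
  paired_kernelSHAP_exact_bilinear_general q hq A ν hν n Z hfull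
end
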